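/- arXiv:1906.05084 — 3 statements merged into one kernel-verified Lean document; each statement's English description precedes it below -/
import Mathlib

section
/- Let u : ℝ³ → ℝ be smooth. Then the pointwise identity (∂₃u − ∂₁³u − (1/2)(∂₁u)³)·(sin(u) − ∂₁∂₂u) = ∂₁P₁ + ∂₂P₂ + ∂₃P₃ holds, where P₁ = −(1/2)(∂₂u)(∂₃u) + (∂₁²u)(∂₁∂₂u) − (∂₁²u)·sin(u) + (1/2)(∂₁u)²·cos(u), P₂ = −(1/2)(∂₁u)(∂₃u) − (1/2)(∂₁²u)² + (1/8)(∂₁u)⁴, and P₃ = (1/2)(∂₁u)(∂₂u) − cos(u). -/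
noncomputable def pd1 (G : ℝ × ℝ × ℝ → ℝ) : ℝ × ℝ × ℝ → ℝ := fun p => fderiv ℝ G p (1, 0, 0)
noncomputable def pd2 (G : ℝ × ℝ × ℝ → ℝ) : ℝ × ℝ × ℝ → ℝ := fun p => fderiv ℝ G p (0, 1, 0)
noncomputable def pd3 (G : ℝ × ℝ × ℝ → ℝ) : ℝ × ℝ × ℝ → ℝ := fun p => fderiv ℝ G p (0, 0, 1)

noncomputable def UU (u : ℝ → ℝ → ℝ → ℝ) : ℝ × ℝ × ℝ → ℝ := fun p => u p.1 p.2.1 p.2.2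

lemma contDiff_pdv (G : ℝ × ℝ × ℝ → ℝ) (hG : ContDiff ℝ (⊤ : ℕ∞) G) (v : ℝ × ℝ × ℝ) :
    ContDiff ℝ (⊤ : ℕ∞) (fun p => fderiv ℝ G p v) :=
  (ContinuousLinearMap.apply ℝ ℝ v).contDiff.comp (hG.fderiv_right (by simp))

lemma contDiff_pd1 {G : ℝ × ℝ × ℝ → ℝ} (hG : ContDiff ℝ (⊤ : ℕ∞) G) : ContDiff ℝ (⊤ : ℕ∞) (pd1 G) :=
  contDiff_pdv G hG _
lemma contDiff_pd2 {G : ℝ × ℝ × ℝ → ℝ} (hG : ContDiff ℝ (⊤ : ℕ∞) G) : ContDiff ℝ (⊤ : ℕ∞) (pd2 G) :=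
  contDiff_pdv G hG _
lemma contDiff_pd3 {G : ℝ × ℝ × ℝ → ℝ} (hG : ContDiff ℝ (⊤ : ℕ∞) G) : ContDiff ℝ (⊤ : ℕ∞) (pd3 G) :=
  contDiff_pdv G hG _

noncomputable def D1 (u : ℝ → ℝ → ℝ → ℝ) : ℝ → ℝ → ℝ → ℝ :=
  fun x y z => deriv (fun s => u s y z) x
noncomputable def D2 (u : ℝ → ℝ → ℝ → ℝ) : ℝ → ℝ → ℝ → ℝ :=
  fun x y z => deriv (fun s => u x s z) y
noncomputable def D3 (u : ℝ → ℝ → ℝ → ℝ) : ℝ → ℝ → ℝ → ℝ :=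
  fun x y z => deriv (fun s => u x y s) z

lemma hasD1 (G : ℝ × ℝ × ℝ → ℝ) (hG : ContDiff ℝ (⊤ : ℕ∞) G) (x y z : ℝ) :
    HasDerivAt (fun s => G (s, y, z)) (pd1 G (x, y, z)) x := by
  have hline : HasDerivAt (fun s : ℝ => ((s, y, z) : ℝ × ℝ × ℝ)) ((1, 0, 0) : ℝ × ℝ × ℝ) x :=
    (hasDerivAt_id x).prodMk ((hasDerivAt_const x y).prodMk (hasDerivAt_const x z))
  exact (hG.differentiable (by simp) (x, y, z)).hasFDerivAt.comp_hasDerivAt x hline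

lemma hasD2 (G : ℝ × ℝ × ℝ → ℝ) (hG : ContDiff ℝ (⊤ : ℕ∞) G) (x y z : ℝ) :
    HasDerivAt (fun s => G (x, s, z)) (pd2 G (x, y, z)) y := by
  have hline : HasDerivAt (fun s : ℝ => ((x, s, z) : ℝ × ℝ × ℝ)) ((0, 1, 0) : ℝ × ℝ × ℝ) y :=
    (hasDerivAt_const y x).prodMk ((hasDerivAt_id y).prodMk (hasDerivAt_const y z))
  exact (hG.differentiable (by simp) (x, y, z)).hasFDerivAt.comp_hasDerivAt y hline

lemma hasD3 (G : ℝ × ℝ × ℝ → ℝ) (hG : ContDiff ℝ (⊤ : ℕ∞) G) (x y z : ℝ) :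
    HasDerivAt (fun s => G (x, y, s)) (pd3 G (x, y, z)) z := by
  have hline : HasDerivAt (fun s : ℝ => ((x, y, s) : ℝ × ℝ × ℝ)) ((0, 0, 1) : ℝ × ℝ × ℝ) z :=
    (hasDerivAt_const z x).prodMk ((hasDerivAt_const z y).prodMk (hasDerivAt_id z))
  exact (hG.differentiable (by simp) (x, y, z)).hasFDerivAt.comp_hasDerivAt z hline

lemma pd_symm_pt (G : ℝ × ℝ × ℝ → ℝ) (hG : ContDiff ℝ (⊤ : ℕ∞) G) (v w p : ℝ × ℝ × ℝ) :
    fderiv ℝ (fun q => fderiv ℝ G q v) p w = fderiv ℝ (fun q => fderiv ℝ G q w) p v := by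
  have hf : ∀ q, HasFDerivAt G (fderiv ℝ G q) q := fun q =>
    (hG.differentiable (by simp) q).hasFDerivAt
  have hf'' : HasFDerivAt (fderiv ℝ G) (fderiv ℝ (fderiv ℝ G) p) p :=
    ((hG.fderiv_right (m := ((⊤ : ℕ∞) : WithTop ℕ∞)) (by simp)).differentiable (by simp) p).hasFDerivAt
  have hsymm := second_derivative_symmetric hf hf'' v w
  have hv : HasFDerivAt (fun q => fderiv ℝ G q v)
      ((ContinuousLinearMap.apply ℝ ℝ v).comp (fderiv ℝ (fderiv ℝ G) p)) p :=
    (ContinuousLinearMap.apply ℝ ℝ v).hasFDerivAt.comp p hf''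
  have hw : HasFDerivAt (fun q => fderiv ℝ G q w)
      ((ContinuousLinearMap.apply ℝ ℝ w).comp (fderiv ℝ (fderiv ℝ G) p)) p :=
    (ContinuousLinearMap.apply ℝ ℝ w).hasFDerivAt.comp p hf''
  rw [hv.fderiv, hw.fderiv]
  simpa using hsymm.symm

lemma pd12_comm (G : ℝ × ℝ × ℝ → ℝ) (hG : ContDiff ℝ (⊤ : ℕ∞) G) : pd2 (pd1 G) = pd1 (pd2 G) :=
  funext fun p => pd_symm_pt G hG _ _ p
lemma pd13_comm (G : ℝ × ℝ × ℝ → ℝ) (hG : ContDiff ℝ (⊤ : ℕ∞) G) : pd3 (pd1 G) = pd1 (pd3 G) :=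
  funext fun p => pd_symm_pt G hG _ _ p
lemma pd23_comm (G : ℝ × ℝ × ℝ → ℝ) (hG : ContDiff ℝ (⊤ : ℕ∞) G) : pd3 (pd2 G) = pd2 (pd3 G) :=
  funext fun p => pd_symm_pt G hG _ _ p

lemma D1_pt (u : ℝ → ℝ → ℝ → ℝ) (hu : ContDiff ℝ (⊤ : ℕ∞) (UU u)) (x y z : ℝ) :
    D1 u x y z = pd1 (UU u) (x, y, z) := (hasD1 (UU u) hu x y z).deriv
lemma D2_pt (u : ℝ → ℝ → ℝ → ℝ) (hu : ContDiff ℝ (⊤ : ℕ∞) (UU u)) (x y z : ℝ) :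
    D2 u x y z = pd2 (UU u) (x, y, z) := (hasD2 (UU u) hu x y z).deriv
lemma D3_pt (u : ℝ → ℝ → ℝ → ℝ) (hu : ContDiff ℝ (⊤ : ℕ∞) (UU u)) (x y z : ℝ) :
    D3 u x y z = pd3 (UU u) (x, y, z) := (hasD3 (UU u) hu x y z).deriv

lemma D11_pt (u : ℝ → ℝ → ℝ → ℝ) (hu : ContDiff ℝ (⊤ : ℕ∞) (UU u)) (x y z : ℝ) :
    D1 (D1 u) x y z = pd1 (pd1 (UU u)) (x, y, z) := by
  have he : (fun s => D1 u s y z) = fun s => pd1 (UU u) (s, y, z) :=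
    funext fun s => D1_pt u hu s y z
  show deriv (fun s => D1 u s y z) x = _
  rw [he]
  exact (hasD1 (pd1 (UU u)) (contDiff_pd1 hu) x y z).deriv

lemma D12_pt (u : ℝ → ℝ → ℝ → ℝ) (hu : ContDiff ℝ (⊤ : ℕ∞) (UU u)) (x y z : ℝ) :
    D1 (D2 u) x y z = pd1 (pd2 (UU u)) (x, y, z) := by
  have he : (fun s => D2 u s y z) = fun s => pd2 (UU u) (s, y, z) :=
    funext fun s => D2_pt u hu s y z
  show deriv (fun s => D2 u s y z) x = _
  rw [he]
  exact (hasD1 (pd2 (UU u)) (contDiff_pd2 hu) x y z).deriv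

lemma D111_pt (u : ℝ → ℝ → ℝ → ℝ) (hu : ContDiff ℝ (⊤ : ℕ∞) (UU u)) (x y z : ℝ) :
    D1 (D1 (D1 u)) x y z = pd1 (pd1 (pd1 (UU u))) (x, y, z) := by
  have he : (fun s => D1 (D1 u) s y z) = fun s => pd1 (pd1 (UU u)) (s, y, z) :=
    funext fun s => D11_pt u hu s y z
  show deriv (fun s => D1 (D1 u) s y z) x = _
  rw [he]
  exact (hasD1 (pd1 (pd1 (UU u))) (contDiff_pd1 (contDiff_pd1 hu)) x y z).deriv

/-- The coefficient `L₍₂₃₎` of the sine-Gordon Lagrangian 2-form. -/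
noncomputable def L23 (u : ℝ → ℝ → ℝ → ℝ) : ℝ → ℝ → ℝ → ℝ := fun x y z =>
  -(1 / 2) * D2 u x y z * D3 u x y z + D1 (D1 u) x y z * D1 (D2 u) x y z
    - D1 (D1 u) x y z * Real.sin (u x y z) + (1 / 2) * (D1 u x y z) ^ 2 * Real.cos (u x y z)

/-- The coefficient `L₍₃₁₎` of the sine-Gordon Lagrangian 2-form. -/
noncomputable def L31 (u : ℝ → ℝ → ℝ → ℝ) : ℝ → ℝ → ℝ → ℝ := fun x y z =>
  -(1 / 2) * D1 u x y z * D3 u x y z - (1 / 2) * (D1 (D1 u) x y z) ^ 2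
    + (1 / 8) * (D1 u x y z) ^ 4

/-- The coefficient `L₍₁₂₎` of the sine-Gordon Lagrangian 2-form. -/
noncomputable def L12 (u : ℝ → ℝ → ℝ → ℝ) : ℝ → ℝ → ℝ → ℝ := fun x y z =>
  (1 / 2) * D1 u x y z * D2 u x y z - Real.cos (u x y z)

/-- The divergence identity defining the sine-Gordon Lagrangian 2-form:
`(u₃ − u₁₁₁ − (1/2)u₁³)·(sin u − u₁₂) = ∂₁L₍₂₃₎ + ∂₂L₍₃₁₎ + ∂₃L₍₁₂₎`. -/
theorem stmt_3 (u : ℝ → ℝ → ℝ → ℝ)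
    (hu : ContDiff ℝ (⊤ : ℕ∞) (fun p : ℝ × ℝ × ℝ => u p.1 p.2.1 p.2.2)) (x y z : ℝ) :
    (D3 u x y z - D1 (D1 (D1 u)) x y z - (1 / 2) * (D1 u x y z) ^ 3)
        * (Real.sin (u x y z) - D1 (D2 u) x y z)
      = D1 (L23 u) x y z + D2 (L31 u) x y z + D3 (L12 u) x y z := by
  have hA : ContDiff ℝ (⊤ : ℕ∞) (UU u) := hu
  have hA1 := contDiff_pd1 hA
  have hA2 := contDiff_pd2 hA
  have hA3 := contDiff_pd3 hA
  have hA11 := contDiff_pd1 hA1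
  have hA12 := contDiff_pd1 hA2
  -- commutation for third derivatives
  have c112 : pd2 (pd1 (pd1 (UU u))) = pd1 (pd1 (pd2 (UU u))) := by
    rw [pd12_comm (pd1 (UU u)) hA1, pd12_comm (UU u) hA]
  -- the three line functions
  have hL23fun : (fun s => L23 u s y z) = fun s =>
      -(1 / 2) * pd2 (UU u) (s, y, z) * pd3 (UU u) (s, y, z)
        + pd1 (pd1 (UU u)) (s, y, z) * pd1 (pd2 (UU u)) (s, y, z)
        - pd1 (pd1 (UU u)) (s, y, z) * Real.sin (UU u (s, y, z))
        + (1 / 2) * (pd1 (UU u) (s, y, z)) ^ 2 * Real.cos (UU u (s, y, z)) := by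
    funext s
    simp only [L23, D1_pt u hA, D2_pt u hA, D3_pt u hA, D11_pt u hA, D12_pt u hA]
    rfl
  have hL31fun : (fun t => L31 u x t z) = fun t =>
      -(1 / 2) * pd1 (UU u) (x, t, z) * pd3 (UU u) (x, t, z)
        - (1 / 2) * (pd1 (pd1 (UU u)) (x, t, z)) ^ 2
        + (1 / 8) * (pd1 (UU u) (x, t, z)) ^ 4 := by
    funext t
    simp only [L31, D1_pt u hA, D3_pt u hA, D11_pt u hA]
  have hL12fun : (fun t => L12 u x y t) = fun t =>
      (1 / 2) * pd1 (UU u) (x, y, t) * pd2 (UU u) (x, y, t) - Real.cos (UU u (x, y, t)) := by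
    funext t
    simp only [L12, D1_pt u hA, D2_pt u hA]
    rfl
  -- derivatives along the lines
  have b := hasD1 (UU u) hA x y z
  have b1 := hasD1 (pd1 (UU u)) hA1 x y z
  have b2 := hasD1 (pd2 (UU u)) hA2 x y z
  have b3 := hasD1 (pd3 (UU u)) hA3 x y z
  have b11 := hasD1 (pd1 (pd1 (UU u))) hA11 x y z
  have b12 := hasD1 (pd1 (pd2 (UU u))) hA12 x y z
  have k1 := hasD2 (pd1 (UU u)) hA1 x y z
  have k3 := hasD2 (pd3 (UU u)) hA3 x y z
  have k11 := hasD2 (pd1 (pd1 (UU u))) hA11 x y z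
  have m := hasD3 (UU u) hA x y z
  have m1 := hasD3 (pd1 (UU u)) hA1 x y z
  have m2 := hasD3 (pd2 (UU u)) hA2 x y z
  have H23 : HasDerivAt (fun s => L23 u s y z)
      (-(1 / 2) * pd1 (pd2 (UU u)) (x, y, z) * pd3 (UU u) (x, y, z)
        - (1 / 2) * pd2 (UU u) (x, y, z) * pd1 (pd3 (UU u)) (x, y, z)
        + pd1 (pd1 (pd1 (UU u))) (x, y, z) * pd1 (pd2 (UU u)) (x, y, z)
        + pd1 (pd1 (UU u)) (x, y, z) * pd1 (pd1 (pd2 (UU u))) (x, y, z)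
        - pd1 (pd1 (pd1 (UU u))) (x, y, z) * Real.sin (UU u (x, y, z))
        - pd1 (pd1 (UU u)) (x, y, z) * Real.cos (UU u (x, y, z)) * pd1 (UU u) (x, y, z)
        + pd1 (UU u) (x, y, z) * pd1 (pd1 (UU u)) (x, y, z) * Real.cos (UU u (x, y, z))
        - (1 / 2) * (pd1 (UU u) (x, y, z)) ^ 3 * Real.sin (UU u (x, y, z))) x := by
    rw [hL23fun]
    have hh := ((((b2.const_mul (-(1 / 2))).mul b3).add (b11.mul b12)).sub
        (b11.mul b.sin)).add (((b1.pow 2).const_mul (1 / 2)).mul b.cos)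
    refine hh.congr_deriv ?_
    simp only [UU, Pi.pow_apply]
    ring
  have H31 : HasDerivAt (fun t => L31 u x t z)
      (-(1 / 2) * pd1 (pd2 (UU u)) (x, y, z) * pd3 (UU u) (x, y, z)
        - (1 / 2) * pd1 (UU u) (x, y, z) * pd2 (pd3 (UU u)) (x, y, z)
        - pd1 (pd1 (UU u)) (x, y, z) * pd1 (pd1 (pd2 (UU u))) (x, y, z)
        + (1 / 2) * (pd1 (UU u) (x, y, z)) ^ 3 * pd1 (pd2 (UU u)) (x, y, z)) y := by
    rw [hL31fun]
    have hh := (((k1.const_mul (-(1 / 2))).mul k3).sub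
        ((k11.pow 2).const_mul (1 / 2))).add ((k1.pow 4).const_mul (1 / 8))
    refine hh.congr_deriv ?_
    rw [pd12_comm (UU u) hA, c112]
    norm_num
    ring
  have H12 : HasDerivAt (fun t => L12 u x y t)
      ((1 / 2) * pd1 (pd3 (UU u)) (x, y, z) * pd2 (UU u) (x, y, z)
        + (1 / 2) * pd1 (UU u) (x, y, z) * pd2 (pd3 (UU u)) (x, y, z)
        + Real.sin (UU u (x, y, z)) * pd3 (UU u) (x, y, z)) z := by
    rw [hL12fun]
    have hh := ((m1.const_mul (1 / 2)).mul m2).sub m.cos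
    refine hh.congr_deriv ?_
    rw [pd13_comm (UU u) hA, pd23_comm (UU u) hA]
    simp only [UU]
    ring
  rw [D3_pt u hA, D111_pt u hA, D1_pt u hA, D12_pt u hA]
  show _ = deriv (fun s => L23 u s y z) x + deriv (fun t => L31 u x t z) y
      + deriv (fun t => L12 u x y t) z
  rw [H23.deriv, H31.deriv, H12.deriv]
  have hsin : Real.sin (u x y z) = Real.sin (UU u (x, y, z)) := rfl
  rw [hsin]
  ring
end

section
/- Let u : ℝ³ → ℝ be smooth, and let L₍₂₃₎, L₍₃₁₎, L₍₁₂₎ be the sine-Gordon multiform coefficients: L₍₂₃₎ = −(1/2)(∂₂u)(∂₃u) + (∂₁²u)(∂₁∂₂u) − (∂₁²u)sin(u) + (1/2)(∂₁u)²cos(u), L₍₃₁₎ = −(1/2)(∂₁u)(∂₃u) − (1/2)(∂₁²u)² + (1/8)(∂₁u)⁴, L₍₁₂₎ = (1/2)(∂₁u)(∂₂u) − cos(u). If u satisfies the sine-Gordon equation ∂₁∂₂u = sin(u) everywhere, then ∂₁L₍₂₃₎ + ∂₂L₍₃₁₎ + ∂₃L₍₁₂₎ = 0 everywhere. -/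
/- ### Auxiliary machinery -/

/-- Directional derivative of a function on `ℝ³`. -/
noncomputable def Dd (F : ℝ × ℝ × ℝ → ℝ) (v : ℝ × ℝ × ℝ) : ℝ × ℝ × ℝ → ℝ :=
  fun p => fderiv ℝ F p v

def ee1 : ℝ × ℝ × ℝ := (1, 0, 0)
def ee2 : ℝ × ℝ × ℝ := (0, 1, 0)
def ee3 : ℝ × ℝ × ℝ := (0, 0, 1)

/-- The function on `ℝ³` associated to a curried `u`. -/
noncomputable def PF (u : ℝ → ℝ → ℝ → ℝ) : ℝ × ℝ × ℝ → ℝ := fun p => u p.1 p.2.1 p.2.2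

lemma Dd_contDiff {F : ℝ × ℝ × ℝ → ℝ} (hF : ContDiff ℝ (⊤ : ℕ∞) F) (v : ℝ × ℝ × ℝ) :
    ContDiff ℝ (⊤ : ℕ∞) (Dd F v) :=
  (hF.fderiv_right (m := (⊤ : ℕ∞)) (by simp)).clm_apply contDiff_const

lemma slice1 {F : ℝ × ℝ × ℝ → ℝ} (hF : ContDiff ℝ (⊤ : ℕ∞) F) (x y z : ℝ) :
    HasDerivAt (fun s => F (s, y, z)) (Dd F ee1 (x, y, z)) x := by
  have hline : HasFDerivAt (fun s : ℝ => (s, y, z))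
      ((ContinuousLinearMap.id ℝ ℝ).prod 0) x :=
    (hasFDerivAt_id x).prodMk (hasFDerivAt_const (y, z) x)
  have h := ((hF.differentiable (by simp) (x, y, z)).hasFDerivAt).comp x hline
  simpa [Dd, ee1, Function.comp_def, Prod.mk_zero_zero] using h.hasDerivAt

lemma slice2 {F : ℝ × ℝ × ℝ → ℝ} (hF : ContDiff ℝ (⊤ : ℕ∞) F) (x y z : ℝ) :
    HasDerivAt (fun s => F (x, s, z)) (Dd F ee2 (x, y, z)) y := by
  have hline : HasFDerivAt (fun s : ℝ => (x, s, z))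
      ((0 : ℝ →L[ℝ] ℝ).prod ((ContinuousLinearMap.id ℝ ℝ).prod 0)) y :=
    (hasFDerivAt_const x y).prodMk ((hasFDerivAt_id y).prodMk (hasFDerivAt_const z y))
  have h := ((hF.differentiable (by simp) (x, y, z)).hasFDerivAt).comp y hline
  simpa [Dd, ee2, Function.comp_def] using h.hasDerivAt

lemma slice3 {F : ℝ × ℝ × ℝ → ℝ} (hF : ContDiff ℝ (⊤ : ℕ∞) F) (x y z : ℝ) :
    HasDerivAt (fun s => F (x, y, s)) (Dd F ee3 (x, y, z)) z := by
  have hline : HasFDerivAt (fun s : ℝ => (x, y, s))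
      ((0 : ℝ →L[ℝ] ℝ).prod ((0 : ℝ →L[ℝ] ℝ).prod (ContinuousLinearMap.id ℝ ℝ))) z :=
    (hasFDerivAt_const x z).prodMk ((hasFDerivAt_const y z).prodMk (hasFDerivAt_id z))
  have h := ((hF.differentiable (by simp) (x, y, z)).hasFDerivAt).comp z hline
  simpa [Dd, ee3, Function.comp_def] using h.hasDerivAt

lemma Dd_comm {F : ℝ × ℝ × ℝ → ℝ} (hF : ContDiff ℝ (⊤ : ℕ∞) F) (v w p : ℝ × ℝ × ℝ) :
    Dd (Dd F v) w p = Dd (Dd F w) v p := by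
  have hdF : DifferentiableAt ℝ (fderiv ℝ F) p :=
    ((hF.fderiv_right (m := (⊤ : ℕ∞)) (by simp)).differentiable (by simp)) p
  have hsym : IsSymmSndFDerivAt ℝ F p :=
    hF.contDiffAt.isSymmSndFDerivAt (by rw [minSmoothness_of_isRCLikeNormedField]; exact WithTop.coe_le_coe.mpr le_top)
  have key : ∀ a : ℝ × ℝ × ℝ, fderiv ℝ (fun q => fderiv ℝ F q a) p =
      (fderiv ℝ (fderiv ℝ F) p).flip a := by
    intro a
    have := fderiv_clm_apply (c := fderiv ℝ F) (u := fun _ => a) hdF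
      (differentiableAt_const a)
    simpa using this
  show fderiv ℝ (fun q => fderiv ℝ F q v) p w = fderiv ℝ (fun q => fderiv ℝ F q w) p v
  rw [key v, key w]
  exact hsym.eq w v

/-- Closure of the sine-Gordon Lagrangian 2-form on solutions of the sine-Gordon
equation `∂₁∂₂u = sin u`. -/
theorem stmt_4 (u : ℝ → ℝ → ℝ → ℝ)
    (hu : ContDiff ℝ (⊤ : ℕ∞) (fun p : ℝ × ℝ × ℝ => u p.1 p.2.1 p.2.2))
    (hSG : ∀ x y z : ℝ, D1 (D2 u) x y z = Real.sin (u x y z)) (x y z : ℝ) :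
    D1 (L23 u) x y z + D2 (L31 u) x y z + D3 (L12 u) x y z = 0 := by
  have hP : ContDiff ℝ (⊤ : ℕ∞) (PF u) := hu
  -- first-order conversions
  have hE1 : ∀ a b c : ℝ, D1 u a b c = Dd (PF u) ee1 (a, b, c) := fun a b c =>
    (slice1 hP a b c).deriv
  have hE2 : ∀ a b c : ℝ, D2 u a b c = Dd (PF u) ee2 (a, b, c) := fun a b c =>
    (slice2 hP a b c).deriv
  have hE3 : ∀ a b c : ℝ, D3 u a b c = Dd (PF u) ee3 (a, b, c) := fun a b c =>
    (slice3 hP a b c).deriv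
  -- second-order conversions
  have hE11 : ∀ a b c : ℝ, D1 (D1 u) a b c = Dd (Dd (PF u) ee1) ee1 (a, b, c) := by
    intro a b c
    have hfun : (fun s => D1 u s b c) = fun s => Dd (PF u) ee1 (s, b, c) :=
      funext fun s => hE1 s b c
    show deriv (fun s => D1 u s b c) a = _
    rw [hfun]
    exact (slice1 (Dd_contDiff hP ee1) a b c).deriv
  have hE12 : ∀ a b c : ℝ, D1 (D2 u) a b c = Dd (Dd (PF u) ee2) ee1 (a, b, c) := by
    intro a b c
    have hfun : (fun s => D2 u s b c) = fun s => Dd (PF u) ee2 (s, b, c) :=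
      funext fun s => hE2 s b c
    show deriv (fun s => D2 u s b c) a = _
    rw [hfun]
    exact (slice1 (Dd_contDiff hP ee2) a b c).deriv
  -- HasDerivAt facts for the first slice (in `s`, at `x`)
  have hA : HasDerivAt (fun s => u s y z) (Dd (PF u) ee1 (x, y, z)) x := slice1 hP x y z
  have h1 : HasDerivAt (fun s => D1 u s y z) (Dd (Dd (PF u) ee1) ee1 (x, y, z)) x := by
    have h := slice1 (Dd_contDiff hP ee1) x y z
    have hfun : (fun s => D1 u s y z) = fun s => Dd (PF u) ee1 (s, y, z) :=
      funext fun s => hE1 s y z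
    rw [hfun]; exact h
  have h2 : HasDerivAt (fun s => D2 u s y z) (Dd (Dd (PF u) ee2) ee1 (x, y, z)) x := by
    have h := slice1 (Dd_contDiff hP ee2) x y z
    have hfun : (fun s => D2 u s y z) = fun s => Dd (PF u) ee2 (s, y, z) :=
      funext fun s => hE2 s y z
    rw [hfun]; exact h
  have h3 : HasDerivAt (fun s => D3 u s y z) (Dd (Dd (PF u) ee3) ee1 (x, y, z)) x := by
    have h := slice1 (Dd_contDiff hP ee3) x y z
    have hfun : (fun s => D3 u s y z) = fun s => Dd (PF u) ee3 (s, y, z) :=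
      funext fun s => hE3 s y z
    rw [hfun]; exact h
  have h11 : HasDerivAt (fun s => D1 (D1 u) s y z)
      (Dd (Dd (Dd (PF u) ee1) ee1) ee1 (x, y, z)) x := by
    have h := slice1 (Dd_contDiff (Dd_contDiff hP ee1) ee1) x y z
    have hfun : (fun s => D1 (D1 u) s y z) = fun s => Dd (Dd (PF u) ee1) ee1 (s, y, z) :=
      funext fun s => hE11 s y z
    rw [hfun]; exact h
  have h12 : HasDerivAt (fun s => D1 (D2 u) s y z)
      (Dd (Dd (Dd (PF u) ee2) ee1) ee1 (x, y, z)) x := by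
    have h := slice1 (Dd_contDiff (Dd_contDiff hP ee2) ee1) x y z
    have hfun : (fun s => D1 (D2 u) s y z) = fun s => Dd (Dd (PF u) ee2) ee1 (s, y, z) :=
      funext fun s => hE12 s y z
    rw [hfun]; exact h
  -- HasDerivAt facts for the second slice (in `t`, at `y`)
  have kA : HasDerivAt (fun t => u x t z) (Dd (PF u) ee2 (x, y, z)) y := slice2 hP x y z
  have k1 : HasDerivAt (fun t => D1 u x t z) (Dd (Dd (PF u) ee1) ee2 (x, y, z)) y := by
    have h := slice2 (Dd_contDiff hP ee1) x y z
    have hfun : (fun t => D1 u x t z) = fun t => Dd (PF u) ee1 (x, t, z) :=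
      funext fun t => hE1 x t z
    rw [hfun]; exact h
  have k3 : HasDerivAt (fun t => D3 u x t z) (Dd (Dd (PF u) ee3) ee2 (x, y, z)) y := by
    have h := slice2 (Dd_contDiff hP ee3) x y z
    have hfun : (fun t => D3 u x t z) = fun t => Dd (PF u) ee3 (x, t, z) :=
      funext fun t => hE3 x t z
    rw [hfun]; exact h
  have k11 : HasDerivAt (fun t => D1 (D1 u) x t z)
      (Dd (Dd (Dd (PF u) ee1) ee1) ee2 (x, y, z)) y := by
    have h := slice2 (Dd_contDiff (Dd_contDiff hP ee1) ee1) x y z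
    have hfun : (fun t => D1 (D1 u) x t z) = fun t => Dd (Dd (PF u) ee1) ee1 (x, t, z) :=
      funext fun t => hE11 x t z
    rw [hfun]; exact h
  -- HasDerivAt facts for the third slice (in `r`, at `z`)
  have mA : HasDerivAt (fun r => u x y r) (Dd (PF u) ee3 (x, y, z)) z := slice3 hP x y z
  have m1 : HasDerivAt (fun r => D1 u x y r) (Dd (Dd (PF u) ee1) ee3 (x, y, z)) z := by
    have h := slice3 (Dd_contDiff hP ee1) x y z
    have hfun : (fun r => D1 u x y r) = fun r => Dd (PF u) ee1 (x, y, r) :=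
      funext fun r => hE1 x y r
    rw [hfun]; exact h
  have m2 : HasDerivAt (fun r => D2 u x y r) (Dd (Dd (PF u) ee2) ee3 (x, y, z)) z := by
    have h := slice3 (Dd_contDiff hP ee2) x y z
    have hfun : (fun r => D2 u x y r) = fun r => Dd (PF u) ee2 (x, y, r) :=
      funext fun r => hE2 x y r
    rw [hfun]; exact h
  -- derivative of L23 in the first variable
  have hL23 : HasDerivAt (fun s => L23 u s y z)
      (-(1 / 2) * (Dd (Dd (PF u) ee2) ee1 (x, y, z) * D3 u x y z
          + D2 u x y z * Dd (Dd (PF u) ee3) ee1 (x, y, z))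
        + (Dd (Dd (Dd (PF u) ee1) ee1) ee1 (x, y, z) * D1 (D2 u) x y z
          + D1 (D1 u) x y z * Dd (Dd (Dd (PF u) ee2) ee1) ee1 (x, y, z))
        - (Dd (Dd (Dd (PF u) ee1) ee1) ee1 (x, y, z) * Real.sin (u x y z)
          + D1 (D1 u) x y z * (Real.cos (u x y z) * Dd (PF u) ee1 (x, y, z)))
        + (D1 u x y z * Dd (Dd (PF u) ee1) ee1 (x, y, z) * Real.cos (u x y z)
          + (1 / 2) * (D1 u x y z) ^ 2
            * (-Real.sin (u x y z) * Dd (PF u) ee1 (x, y, z)))) x := by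
    have h0 := ((((h2.const_mul (-(1 / 2) : ℝ)).mul h3).add (h11.mul h12)).sub
        (h11.mul hA.sin)).add (((h1.pow 2).const_mul ((1 / 2) : ℝ)).mul hA.cos)
    exact h0.congr_deriv (by simp only [Pi.pow_apply]; ring)
  -- derivative of L31 in the second variable
  have hL31 : HasDerivAt (fun t => L31 u x t z)
      (-(1 / 2) * (Dd (Dd (PF u) ee1) ee2 (x, y, z) * D3 u x y z
          + D1 u x y z * Dd (Dd (PF u) ee3) ee2 (x, y, z))
        - Dd (Dd (Dd (PF u) ee1) ee1) ee2 (x, y, z) * D1 (D1 u) x y z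
        + (1 / 2) * (D1 u x y z) ^ 3 * Dd (Dd (PF u) ee1) ee2 (x, y, z)) y := by
    have h0 := ((((k1.const_mul (-(1 / 2) : ℝ)).mul k3).sub
        ((k11.pow 2).const_mul ((1 / 2) : ℝ))).add
        ((k1.pow 4).const_mul ((1 / 8) : ℝ)))
    exact h0.congr_deriv (by ring)
  -- derivative of L12 in the third variable
  have hL12 : HasDerivAt (fun r => L12 u x y r)
      ((1 / 2) * (Dd (Dd (PF u) ee1) ee3 (x, y, z) * D2 u x y z
          + D1 u x y z * Dd (Dd (PF u) ee2) ee3 (x, y, z))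
        + Real.sin (u x y z) * Dd (PF u) ee3 (x, y, z)) z := by
    have h0 := (((m1.const_mul ((1 / 2) : ℝ)).mul m2).sub mA.cos)
    exact h0.congr_deriv (by ring)
  -- assemble
  show deriv (fun s => L23 u s y z) x + deriv (fun t => L31 u x t z) y
      + deriv (fun r => L12 u x y r) z = 0
  rw [hL23.deriv, hL31.deriv, hL12.deriv]
  -- key algebraic identities
  have hSGfun : Dd (Dd (PF u) ee2) ee1 = fun q => Real.sin (PF u q) := by
    funext q
    have := (hE12 q.1 q.2.1 q.2.2).symm.trans (hSG q.1 q.2.1 q.2.2)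
    simpa [PF] using this
  have c21 : Dd (Dd (PF u) ee2) ee1 (x, y, z) = Real.sin (u x y z) :=
    (hE12 x y z).symm.trans (hSG x y z) |>.symm ▸ ((hE12 x y z).symm.trans (hSG x y z))
  have c12 : Dd (Dd (PF u) ee1) ee2 (x, y, z) = Real.sin (u x y z) :=
    (Dd_comm hP ee1 ee2 (x, y, z)).trans c21
  have c13 : Dd (Dd (PF u) ee1) ee3 (x, y, z) = Dd (Dd (PF u) ee3) ee1 (x, y, z) :=
    Dd_comm hP ee1 ee3 (x, y, z)
  have c23 : Dd (Dd (PF u) ee2) ee3 (x, y, z) = Dd (Dd (PF u) ee3) ee2 (x, y, z) :=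
    Dd_comm hP ee2 ee3 (x, y, z)
  have c112 : Dd (Dd (Dd (PF u) ee1) ee1) ee2 (x, y, z)
      = Dd (Dd (Dd (PF u) ee2) ee1) ee1 (x, y, z) := by
    have h1' := Dd_comm (Dd_contDiff hP ee1) ee1 ee2 (x, y, z)
    have h2' : Dd (Dd (PF u) ee1) ee2 = Dd (Dd (PF u) ee2) ee1 :=
      funext fun q => Dd_comm hP ee1 ee2 q
    rw [h1', h2']
  rw [hSG x y z, hE1 x y z, hE2 x y z, hE3 x y z, hE11 x y z, c21, c12, c13, c23, c112]
  ring
end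

section
/- Let u : ℝ³ → ℝ be smooth and suppose u satisfies the modified KdV equation ∂₃u = ∂₁³u + (1/2)(∂₁u)³ everywhere. Then with L₍₂₃₎, L₍₃₁₎, L₍₁₂₎ the sine-Gordon multiform coefficients (L₍₂₃₎ = −(1/2)(∂₂u)(∂₃u) + (∂₁²u)(∂₁∂₂u) − (∂₁²u)sin(u) + (1/2)(∂₁u)²cos(u), L₍₃₁₎ = −(1/2)(∂₁u)(∂₃u) − (1/2)(∂₁²u)² + (1/8)(∂₁u)⁴, L₍₁₂₎ = (1/2)(∂₁u)(∂₂u) − cos(u)), one has ∂₁L₍₂₃₎ + ∂₂L₍₃₁₎ + ∂₃L₍₁₂₎ = 0 everywhere. -/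
namespace SGClosure

noncomputable def Pd (v : ℝ×ℝ×ℝ) (F : ℝ×ℝ×ℝ → ℝ) : ℝ×ℝ×ℝ → ℝ := fun p => fderiv ℝ F p v

lemma Pd_contDiff {F : ℝ×ℝ×ℝ → ℝ} (hF : ContDiff ℝ (⊤ : ℕ∞) F) (v : ℝ×ℝ×ℝ) :
    ContDiff ℝ (⊤ : ℕ∞) (Pd v F) :=
  (hF.fderiv_right (by simp)).clm_apply contDiff_const

lemma Pd_comm {F : ℝ×ℝ×ℝ → ℝ} (hF : ContDiff ℝ (⊤ : ℕ∞) F) (v w p) :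
    Pd v (Pd w F) p = Pd w (Pd v F) p := by
  have hd : ∀ q, HasFDerivAt F (fderiv ℝ F q) q := fun q =>
    (hF.differentiable (by simp) q).hasFDerivAt
  have h2 : HasFDerivAt (fderiv ℝ F) (fderiv ℝ (fderiv ℝ F) p) p :=
    (((hF.fderiv_right (m := 1) (by exact WithTop.coe_le_coe.mpr le_top)).differentiable one_ne_zero) p).hasFDerivAt
  have hsymm := second_derivative_symmetric hd h2
  have key : ∀ a : ℝ×ℝ×ℝ, fderiv ℝ (fun q => fderiv ℝ F q a) p =
      (ContinuousLinearMap.apply ℝ ℝ a).comp (fderiv ℝ (fderiv ℝ F) p) := by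
    intro a
    exact (((ContinuousLinearMap.apply ℝ ℝ a).hasFDerivAt).comp p h2).fderiv
  show fderiv ℝ (Pd w F) p v = fderiv ℝ (Pd v F) p w
  have h1 : fderiv ℝ (Pd w F) p v = fderiv ℝ (fderiv ℝ F) p v w := by
    rw [show Pd w F = fun q => fderiv ℝ F q w from rfl, key w]; rfl
  have h1' : fderiv ℝ (Pd v F) p w = fderiv ℝ (fderiv ℝ F) p w v := by
    rw [show Pd v F = fun q => fderiv ℝ F q v from rfl, key v]; rfl
  rw [h1, h1']
  exact hsymm v w

def SM (u : ℝ → ℝ → ℝ → ℝ) : Prop := ContDiff ℝ (⊤ : ℕ∞) (fun p : ℝ×ℝ×ℝ => u p.1 p.2.1 p.2.2)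

lemma curve1 (y z : ℝ) (x : ℝ) : HasDerivAt (fun s : ℝ => ((s, y, z) : ℝ×ℝ×ℝ)) (1, 0, 0) x :=
  (hasDerivAt_id x).prodMk (hasDerivAt_const x (y, z))
lemma curve2 (x z : ℝ) (y : ℝ) : HasDerivAt (fun s : ℝ => ((x, s, z) : ℝ×ℝ×ℝ)) (0, 1, 0) y :=
  (hasDerivAt_const y x).prodMk ((hasDerivAt_id y).prodMk (hasDerivAt_const y z))
lemma curve3 (x y : ℝ) (z : ℝ) : HasDerivAt (fun s : ℝ => ((x, y, s) : ℝ×ℝ×ℝ)) (0, 0, 1) z :=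
  (hasDerivAt_const z x).prodMk ((hasDerivAt_const z y).prodMk (hasDerivAt_id z))

lemma uncurry_D1 {u} (h : SM u) :
    (fun p : ℝ×ℝ×ℝ => D1 u p.1 p.2.1 p.2.2) = Pd (1,0,0) (fun p : ℝ×ℝ×ℝ => u p.1 p.2.1 p.2.2) := by
  funext p
  obtain ⟨x, y, z⟩ := p
  have hF := ((h.differentiable (by simp)) (x,y,z)).hasFDerivAt
  exact (hF.comp_hasDerivAt x (curve1 y z x)).deriv

lemma uncurry_D2 {u} (h : SM u) :
    (fun p : ℝ×ℝ×ℝ => D2 u p.1 p.2.1 p.2.2) = Pd (0,1,0) (fun p : ℝ×ℝ×ℝ => u p.1 p.2.1 p.2.2) := by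
  funext p
  obtain ⟨x, y, z⟩ := p
  have hF := ((h.differentiable (by simp)) (x,y,z)).hasFDerivAt
  exact (hF.comp_hasDerivAt y (curve2 x z y)).deriv

lemma uncurry_D3 {u} (h : SM u) :
    (fun p : ℝ×ℝ×ℝ => D3 u p.1 p.2.1 p.2.2) = Pd (0,0,1) (fun p : ℝ×ℝ×ℝ => u p.1 p.2.1 p.2.2) := by
  funext p
  obtain ⟨x, y, z⟩ := p
  have hF := ((h.differentiable (by simp)) (x,y,z)).hasFDerivAt
  exact (hF.comp_hasDerivAt z (curve3 x y z)).deriv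

lemma SM_D1 {u} (h : SM u) : SM (D1 u) := by
  unfold SM; rw [uncurry_D1 h]; exact Pd_contDiff h _
lemma SM_D2 {u} (h : SM u) : SM (D2 u) := by
  unfold SM; rw [uncurry_D2 h]; exact Pd_contDiff h _
lemma SM_D3 {u} (h : SM u) : SM (D3 u) := by
  unfold SM; rw [uncurry_D3 h]; exact Pd_contDiff h _

lemma Dcomm12 {u} (h : SM u) : D2 (D1 u) = D1 (D2 u) := by
  funext x y z
  have h1 : D2 (D1 u) x y z =
      (fun p : ℝ×ℝ×ℝ => D2 (D1 u) p.1 p.2.1 p.2.2) (x, y, z) := rfl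
  have h2 : D1 (D2 u) x y z =
      (fun p : ℝ×ℝ×ℝ => D1 (D2 u) p.1 p.2.1 p.2.2) (x, y, z) := rfl
  rw [h1, h2, uncurry_D2 (SM_D1 h), uncurry_D1 (SM_D2 h), uncurry_D1 h, uncurry_D2 h]
  exact Pd_comm h _ _ _

lemma Dcomm13 {u} (h : SM u) : D3 (D1 u) = D1 (D3 u) := by
  funext x y z
  have h1 : D3 (D1 u) x y z =
      (fun p : ℝ×ℝ×ℝ => D3 (D1 u) p.1 p.2.1 p.2.2) (x, y, z) := rfl
  have h2 : D1 (D3 u) x y z =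
      (fun p : ℝ×ℝ×ℝ => D1 (D3 u) p.1 p.2.1 p.2.2) (x, y, z) := rfl
  rw [h1, h2, uncurry_D3 (SM_D1 h), uncurry_D1 (SM_D3 h), uncurry_D1 h, uncurry_D3 h]
  exact Pd_comm h _ _ _

lemma Dcomm23 {u} (h : SM u) : D3 (D2 u) = D2 (D3 u) := by
  funext x y z
  have h1 : D3 (D2 u) x y z =
      (fun p : ℝ×ℝ×ℝ => D3 (D2 u) p.1 p.2.1 p.2.2) (x, y, z) := rfl
  have h2 : D2 (D3 u) x y z =
      (fun p : ℝ×ℝ×ℝ => D2 (D3 u) p.1 p.2.1 p.2.2) (x, y, z) := rfl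
  rw [h1, h2, uncurry_D3 (SM_D2 h), uncurry_D2 (SM_D3 h), uncurry_D2 h, uncurry_D3 h]
  exact Pd_comm h _ _ _

lemma hasD1 {u} (h : SM u) (y z x : ℝ) :
    HasDerivAt (fun s => u s y z) (D1 u x y z) x := by
  have hF := ((h.differentiable (by simp)) (x,y,z)).hasFDerivAt
  have H := hF.comp_hasDerivAt x (curve1 y z x)
  exact H.differentiableAt.hasDerivAt

lemma hasD2 {u} (h : SM u) (x z y : ℝ) :
    HasDerivAt (fun s => u x s z) (D2 u x y z) y := by
  have hF := ((h.differentiable (by simp)) (x,y,z)).hasFDerivAt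
  have H := hF.comp_hasDerivAt y (curve2 x z y)
  exact H.differentiableAt.hasDerivAt

lemma hasD3 {u} (h : SM u) (x y z : ℝ) :
    HasDerivAt (fun s => u x y s) (D3 u x y z) z := by
  have hF := ((h.differentiable (by simp)) (x,y,z)).hasFDerivAt
  have H := hF.comp_hasDerivAt z (curve3 x y z)
  exact H.differentiableAt.hasDerivAt

end SGClosure

open SGClosure Real in
/-- Closure of the sine-Gordon Lagrangian 2-form on solutions of the mKdV equation
`∂₃u = ∂₁³u + (1/2)(∂₁u)³`. -/
theorem stmt_5 (u : ℝ → ℝ → ℝ → ℝ)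
    (hu : ContDiff ℝ (⊤ : ℕ∞) (fun p : ℝ × ℝ × ℝ => u p.1 p.2.1 p.2.2))
    (hmKdV : ∀ x y z : ℝ,
      D3 u x y z = D1 (D1 (D1 u)) x y z + (1 / 2) * (D1 u x y z) ^ 3) (x y z : ℝ) :
    D1 (L23 u) x y z + D2 (L31 u) x y z + D3 (L12 u) x y z = 0 := by
  have hu' : SM u := hu
  have h1 := SM_D1 hu'
  have h2 := SM_D2 hu'
  have h3 := SM_D3 hu'
  have h11 := SM_D1 h1
  have h12 := SM_D1 h2
  -- x-slice derivatives
  have a1 := hasD1 hu' y z x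
  have a2 := hasD1 h2 y z x
  have a3 := hasD1 h3 y z x
  have a11 := hasD1 h11 y z x
  have a12 := hasD1 h12 y z x
  -- y-slice derivatives
  have b1 := hasD2 h1 x z y
  have b3 := hasD2 h3 x z y
  have b11 := hasD2 h11 x z y
  -- z-slice derivatives
  have c0 := hasD3 hu' x y z
  have c1 := hasD3 h1 x y z
  have c2 := hasD3 h2 x y z
  have H23 : HasDerivAt (fun s => L23 u s y z)
      (-(1/2) * (D1 (D2 u) x y z * D3 u x y z + D2 u x y z * D1 (D3 u) x y z)
        + D1 (D1 (D1 u)) x y z * D1 (D2 u) x y z + D1 (D1 u) x y z * D1 (D1 (D2 u)) x y z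
        - D1 (D1 (D1 u)) x y z * Real.sin (u x y z)
        - (1/2) * (D1 u x y z) ^ 3 * Real.sin (u x y z)) x := by
    simp only [L23]
    have T := (((((hasDerivAt_const x (-(1/2 : ℝ))).mul a2).mul a3).add
        (a11.mul a12)).sub (a11.mul a1.sin)).add
        (((hasDerivAt_const x ((1/2 : ℝ))).mul ((hasD1 h1 y z x).pow 2)).mul a1.cos)
    refine T.congr_deriv ?_
    simp only [Pi.mul_apply, Pi.pow_apply]
    push_cast
    ring
  have H31 : HasDerivAt (fun s => L31 u x s z)
      (-(1/2) * (D2 (D1 u) x y z * D3 u x y z + D1 u x y z * D2 (D3 u) x y z)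
        - D1 (D1 u) x y z * D2 (D1 (D1 u)) x y z
        + (1/2) * (D1 u x y z) ^ 3 * D2 (D1 u) x y z) y := by
    simp only [L31]
    have T := ((((hasDerivAt_const y (-(1/2 : ℝ))).mul b1).mul b3).sub
        ((hasDerivAt_const y ((1/2 : ℝ))).mul (b11.pow 2))).add
        ((hasDerivAt_const y ((1/8 : ℝ))).mul (b1.pow 4))
    refine T.congr_deriv ?_
    simp only [Pi.mul_apply, Pi.pow_apply]
    push_cast
    ring
  have H12 : HasDerivAt (fun s => L12 u x y s)
      ((1/2) * (D3 (D1 u) x y z * D2 u x y z + D1 u x y z * D3 (D2 u) x y z)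
        + Real.sin (u x y z) * D3 u x y z) z := by
    simp only [L12]
    have T := (((hasDerivAt_const z ((1/2 : ℝ))).mul c1).mul c2).sub c0.cos
    refine T.congr_deriv ?_
    simp only [Pi.mul_apply, Pi.pow_apply]
    ring
  have E23 : D1 (L23 u) x y z = _ := H23.deriv
  have E31 : D2 (L31 u) x y z = _ := H31.deriv
  have E12 : D3 (L12 u) x y z = _ := H12.deriv
  rw [E23, E31, E12, Dcomm12 h1, Dcomm12 hu', Dcomm13 hu', Dcomm23 hu']
  linear_combination (Real.sin (u x y z) - D1 (D2 u) x y z) * hmKdV x y z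
end
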